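/- arXiv:2211.15301 — 3 statements merged into one kernel-verified Lean document; each statement's English description precedes it below -/
import Mathlib

section
/- Let H be an invertible complex n×n matrix written in 2×2 block form H = [[H_k, H_o^T],[H_o, H_d]] with H_k of size k×k and H_d of size (n-k)×(n-k) invertible. Suppose ‖H_k^{-1}‖ ≤ M₁, ‖H_o‖ ≤ M₂, and ‖H_d^{-1}‖ ≤ 1/(F - M₂) for some F > M₂ + M₁M₂². Then ‖H^{-1} - [[H_k^{-1},0],[0,0]]‖ ≤ (M₁M₂ + 1)² / (F - M₂ - M₁M₂²), where ‖·‖ denotes the spectral (operator 2-)norm. -/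
/-!
By the Schur complement formula, `H⁻¹ - diag(H_k⁻¹, 0)` has the blocks `A - H_k⁻¹`,
`-A H_oᵀ H_d⁻¹`, `-H_d⁻¹ H_o A` and `H_d⁻¹ + H_d⁻¹ H_o A H_oᵀ H_d⁻¹`, where
`A = (H_k - B)⁻¹` with `B = H_oᵀ H_d⁻¹ H_o`. The resolvent identity `A = H_k⁻¹ + A B H_k⁻¹`
gives `‖A‖ ≤ M₁ + ‖A‖ ‖B‖ M₁`, hence `‖A‖ ≤ M₁ / (1 - M₁ ‖B‖)`. The spectral norm of a block
matrix is at most the sum of the norms of its blocks, and summing the four submultiplicative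
bounds gives exactly `(M₁ M₂ + 1)² / (F - M₂ - M₁ M₂²)`.
-/

open scoped Matrix Matrix.Norms.L2Operator

namespace Matrix

variable {𝕜 : Type*} [RCLike 𝕜] {l m n p q : Type*}
  [Fintype l] [Fintype m] [Fintype n] [Fintype p] [Fintype q]

lemma l2_opNorm_mul_le_of_le [DecidableEq m] [DecidableEq n] {A : Matrix l m 𝕜}
    {B : Matrix m n 𝕜} {α β : ℝ} (hA : ‖A‖ ≤ α) (hB : ‖B‖ ≤ β) : ‖A * B‖ ≤ α * β :=
  (l2_opNorm_mul A B).trans (mul_le_mul hA hB (norm_nonneg B) ((norm_nonneg A).trans hA))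

lemma l2_opNorm_transpose_le [DecidableEq m] [DecidableEq n] (A : Matrix m n 𝕜) :
    ‖Aᵀ‖ ≤ ‖A‖ := by
  rw [l2_opNorm_def]
  refine ContinuousLinearMap.opNorm_le_bound _ (norm_nonneg A) fun x => ?_
  have h : Aᵀ *ᵥ x = star (Aᴴ *ᵥ star x) := by
    rw [star_mulVec, star_star, conjTranspose_conjTranspose, mulVec_transpose]
  have := l2_opNorm_mulVec Aᴴ (WithLp.toLp 2 (star x.ofLp))
  simpa [h, EuclideanSpace.norm_eq, l2_opNorm_conjTranspose] using this

lemma l2_opNorm_transpose [DecidableEq m] [DecidableEq n] (A : Matrix m n 𝕜) : ‖Aᵀ‖ = ‖A‖ :=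
  le_antisymm A.l2_opNorm_transpose_le (by simpa using Aᵀ.l2_opNorm_transpose_le)

lemma l2_opNorm_one_le [DecidableEq n] : ‖(1 : Matrix n n 𝕜)‖ ≤ 1 := by
  rw [cstar_norm_def, map_one]
  exact ContinuousLinearMap.norm_id_le

lemma l2_opNorm_le_one_of_conjTranspose_mul_self_eq_one [DecidableEq n] {P : Matrix m n 𝕜}
    (hP : Pᴴ * P = 1) : ‖P‖ ≤ 1 := by
  have h : ‖P‖ * ‖P‖ ≤ 1 := by
    rw [← l2_opNorm_conjTranspose_mul_self, hP]
    exact l2_opNorm_one_le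
  nlinarith [norm_nonneg P]

lemma l2_opNorm_mul_mul_conjTranspose_le [DecidableEq l] [DecidableEq m] [DecidableEq n]
    [DecidableEq p] {P : Matrix l m 𝕜} {Q : Matrix p n 𝕜} (hP : Pᴴ * P = 1) (hQ : Qᴴ * Q = 1)
    (X : Matrix m n 𝕜) : ‖P * X * Qᴴ‖ ≤ ‖X‖ := by
  have hQ' : ‖Qᴴ‖ ≤ 1 := by
    rw [l2_opNorm_conjTranspose]
    exact l2_opNorm_le_one_of_conjTranspose_mul_self_eq_one hQ
  simpa using l2_opNorm_mul_le_of_le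
    (l2_opNorm_mul_le_of_le (l2_opNorm_le_one_of_conjTranspose_mul_self_eq_one hP) le_rfl) hQ'

lemma fromBlocks_eq_add_fromRows_mul_mul_conjTranspose [DecidableEq m] [DecidableEq n]
    [DecidableEq p] [DecidableEq q]
    (A : Matrix m p 𝕜) (B : Matrix m q 𝕜) (C : Matrix n p 𝕜) (D : Matrix n q 𝕜) :
    fromBlocks A B C D =
      fromRows (1 : Matrix m m 𝕜) 0 * A * (fromRows (1 : Matrix p p 𝕜) 0)ᴴ
        + fromRows (1 : Matrix m m 𝕜) 0 * B * (fromRows 0 (1 : Matrix q q 𝕜))ᴴ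
        + fromRows 0 (1 : Matrix n n 𝕜) * C * (fromRows (1 : Matrix p p 𝕜) 0)ᴴ
        + fromRows 0 (1 : Matrix n n 𝕜) * D * (fromRows 0 (1 : Matrix q q 𝕜))ᴴ := by
  ext (i | i) (j | j) <;>
    simp [conjTranspose_fromRows_eq_fromCols_conjTranspose, fromRows_mul]

lemma conjTranspose_fromRows_one_zero_mul_self [DecidableEq m] :
    (fromRows (1 : Matrix m m 𝕜) (0 : Matrix n m 𝕜))ᴴ
      * fromRows (1 : Matrix m m 𝕜) (0 : Matrix n m 𝕜) = 1 := by
  simp [conjTranspose_fromRows_eq_fromCols_conjTranspose, fromCols_mul_fromRows]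

lemma conjTranspose_fromRows_zero_one_mul_self [DecidableEq n] :
    (fromRows (0 : Matrix m n 𝕜) (1 : Matrix n n 𝕜))ᴴ
      * fromRows (0 : Matrix m n 𝕜) (1 : Matrix n n 𝕜) = 1 := by
  simp [conjTranspose_fromRows_eq_fromCols_conjTranspose, fromCols_mul_fromRows]

lemma l2_opNorm_fromBlocks_le [DecidableEq m] [DecidableEq n] [DecidableEq p] [DecidableEq q]
    (A : Matrix m p 𝕜) (B : Matrix m q 𝕜) (C : Matrix n p 𝕜) (D : Matrix n q 𝕜) :
    ‖fromBlocks A B C D‖ ≤ ‖A‖ + ‖B‖ + ‖C‖ + ‖D‖ := by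
  rw [fromBlocks_eq_add_fromRows_mul_mul_conjTranspose]
  refine norm_add₄_le.trans (add_le_add (add_le_add (add_le_add ?_ ?_) ?_) ?_)
  · exact l2_opNorm_mul_mul_conjTranspose_le conjTranspose_fromRows_one_zero_mul_self
      conjTranspose_fromRows_one_zero_mul_self A
  · exact l2_opNorm_mul_mul_conjTranspose_le conjTranspose_fromRows_one_zero_mul_self
      conjTranspose_fromRows_zero_one_mul_self B
  · exact l2_opNorm_mul_mul_conjTranspose_le conjTranspose_fromRows_zero_one_mul_self
      conjTranspose_fromRows_one_zero_mul_self C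
  · exact l2_opNorm_mul_mul_conjTranspose_le conjTranspose_fromRows_zero_one_mul_self
      conjTranspose_fromRows_zero_one_mul_self D

lemma l2_opNorm_inv_sub_le [DecidableEq n] {K B : Matrix n n 𝕜} (hK : IsUnit K)
    (hKB : IsUnit (K - B)) {a b : ℝ} (ha : ‖K⁻¹‖ ≤ a) (hb : ‖B‖ ≤ b) (hab : a * b < 1) :
    ‖(K - B)⁻¹‖ ≤ a / (1 - a * b) := by
  have resolvent : (K - B)⁻¹ = K⁻¹ + (K - B)⁻¹ * B * K⁻¹ := by
    rw [← sub_eq_iff_eq_add', inv_sub_inv (iff_of_true hKB hK), sub_sub_cancel]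
  have self_bound : ‖(K - B)⁻¹‖ ≤ a + ‖(K - B)⁻¹‖ * b * a := by
    conv_lhs => rw [resolvent]
    exact norm_add_le_of_le ha (l2_opNorm_mul_le_of_le (l2_opNorm_mul_le_of_le le_rfl hb) ha)
  rw [le_div_iff₀ (by linarith)]
  linear_combination self_bound

theorem isUnit_fromBlocks_iff_of_isUnit₂₂ {α : Type*} [CommRing α] [DecidableEq m]
    [DecidableEq n] {A : Matrix m m α} {B : Matrix m n α} {C : Matrix n m α} {D : Matrix n n α}
    (hD : IsUnit D) : IsUnit (fromBlocks A B C D) ↔ IsUnit (A - B * D⁻¹ * C) := by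
  let := hD.invertible
  rw [isUnit_fromBlocks_iff_of_invertible₂₂, invOf_eq_nonsing_inv]

theorem inv_fromBlocks₂₂_eq_of_isUnit {α : Type*} [CommRing α] [DecidableEq m] [DecidableEq n]
    {A : Matrix m m α} {B : Matrix m n α} {C : Matrix n m α} {D : Matrix n n α}
    (hD : IsUnit D) (hS : IsUnit (A - B * D⁻¹ * C)) :
    (fromBlocks A B C D)⁻¹ =
      fromBlocks (A - B * D⁻¹ * C)⁻¹ (-((A - B * D⁻¹ * C)⁻¹ * B * D⁻¹))
        (-(D⁻¹ * C * (A - B * D⁻¹ * C)⁻¹))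
        (D⁻¹ + D⁻¹ * C * (A - B * D⁻¹ * C)⁻¹ * B * D⁻¹) := by
  let := hD.invertible
  let : Invertible (A - B * ⅟D * C) := by rw [invOf_eq_nonsing_inv]; exact hS.invertible
  let := fromBlocks₂₂Invertible A B C D
  simp only [← invOf_eq_nonsing_inv, invOf_fromBlocks₂₂_eq]

theorem l2_opNorm_inv_fromBlocks_sub_le [DecidableEq m] [DecidableEq n] {K : Matrix m m 𝕜}
    {P : Matrix m n 𝕜} {Q : Matrix n m 𝕜} {D : Matrix n n 𝕜} (hH : IsUnit (fromBlocks K P Q D))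
    (hK : IsUnit K) (hD : IsUnit D) {a p q d : ℝ} (ha : ‖K⁻¹‖ ≤ a) (hp : ‖P‖ ≤ p)
    (hq : ‖Q‖ ≤ q) (hd : ‖D⁻¹‖ ≤ d) (h : a * (p * d * q) < 1) :
    ‖(fromBlocks K P Q D)⁻¹ - fromBlocks K⁻¹ 0 0 0‖ ≤
      d * (a * p + 1) * (a * q + 1) / (1 - a * (p * d * q)) := by
  set S := K - P * D⁻¹ * Q
  have hS : IsUnit S := (isUnit_fromBlocks_iff_of_isUnit₂₂ hD).mp hH
  have hPDQ : ‖P * D⁻¹ * Q‖ ≤ p * d * q :=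
    l2_opNorm_mul_le_of_le (l2_opNorm_mul_le_of_le hp hd) hq
  set x := a / (1 - a * (p * d * q))
  have hx : ‖S⁻¹‖ ≤ x := l2_opNorm_inv_sub_le hK hS ha hPDQ h
  have hdiff : (fromBlocks K P Q D)⁻¹ - fromBlocks K⁻¹ 0 0 0 =
      fromBlocks (S⁻¹ * (P * D⁻¹ * Q) * K⁻¹) (-(S⁻¹ * P * D⁻¹)) (-(D⁻¹ * Q * S⁻¹))
        (D⁻¹ + D⁻¹ * Q * S⁻¹ * P * D⁻¹) := by
    have corner : S⁻¹ - K⁻¹ = S⁻¹ * (P * D⁻¹ * Q) * K⁻¹ := by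
      rw [inv_sub_inv (iff_of_true hS hK), sub_sub_cancel]
    rw [inv_fromBlocks₂₂_eq_of_isUnit hD hS, ← corner]
    ext (i | i) (j | j) <;> simp [S]
  rw [hdiff]
  calc _ ≤ _ := l2_opNorm_fromBlocks_le _ _ _ _
    _ ≤ x * (p * d * q) * a + x * p * d + d * q * x + (d + d * q * x * p * d) := by
      simp only [norm_neg]
      gcongr
      · exact l2_opNorm_mul_le_of_le (l2_opNorm_mul_le_of_le hx hPDQ) ha
      · exact l2_opNorm_mul_le_of_le (l2_opNorm_mul_le_of_le hx hp) hd
      · exact l2_opNorm_mul_le_of_le (l2_opNorm_mul_le_of_le hd hq) hx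
      · exact norm_add_le_of_le hd <| l2_opNorm_mul_le_of_le (l2_opNorm_mul_le_of_le
          (l2_opNorm_mul_le_of_le (l2_opNorm_mul_le_of_le hd hq) hx) hp) hd
    _ = d * (a * p + 1) * (a * q + 1) / (1 - a * (p * d * q)) := by
      have hne : 1 - a * (p * d * q) ≠ 0 := by linarith
      have hxs : x * (1 - a * (p * d * q)) = a := div_mul_cancel₀ a hne
      rw [eq_div_iff hne]
      linear_combination (p * d * q * a + p * d + d * q + d * q * p * d) * hxs

end Matrix

/-- norm bound on the difference between the inverse of a block
matrix and the padded inverse of its top-left block. -/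
theorem block_inverse_approx_bound {k m : ℕ}
    (Hk : Matrix (Fin k) (Fin k) ℂ) (Ho : Matrix (Fin m) (Fin k) ℂ)
    (Hd : Matrix (Fin m) (Fin m) ℂ) (M₁ M₂ F : ℝ)
    (hH : IsUnit (Matrix.fromBlocks Hk Hoᵀ Ho Hd))
    (hHk : IsUnit Hk) (hHd : IsUnit Hd)
    (h1 : ‖Hk⁻¹‖ ≤ M₁) (h2 : ‖Ho‖ ≤ M₂) (h3 : ‖Hd⁻¹‖ ≤ 1 / (F - M₂))
    (hF : M₂ + M₁ * M₂ ^ 2 < F) :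
    ‖(Matrix.fromBlocks Hk Hoᵀ Ho Hd)⁻¹ - Matrix.fromBlocks Hk⁻¹ 0 0 0‖ ≤
      (M₁ * M₂ + 1) ^ 2 / (F - M₂ - M₁ * M₂ ^ 2) := by
  have hM₁ : 0 ≤ M₁ := (norm_nonneg _).trans h1
  have hG : 0 < F - M₂ := by linarith [mul_nonneg hM₁ (sq_nonneg M₂)]
  have hsmall : M₁ * (M₂ * (1 / (F - M₂)) * M₂) < 1 := by
    rw [show M₁ * (M₂ * (1 / (F - M₂)) * M₂) = M₁ * M₂ ^ 2 / (F - M₂) by ring, div_lt_one hG]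
    linarith
  convert Matrix.l2_opNorm_inv_fromBlocks_sub_le hH hHk hHd h1
    ((Matrix.l2_opNorm_transpose Ho).trans_le h2) h2 h3 hsmall using 1
  field_simp
end

section
/- Suppose an n×n real Laplacian matrix L is k-block-ideal with respect to a k-way partition {I₁,...,I_k} of {1,...,n}, i.e., its matrix of k bottom eigenvectors satisfies V_k = P S for the 0/1 indicator matrix P = [1_{I₁},...,1_{I_k}] and an invertible k×k matrix S. Let Λ_k = diag(λ₁(L),...,λ_k(L)), let G(s) be diagonal with entries g_i(s), define ĝ_j(s) = (∑_{i∈I_j} g_i^{-1}(s))^{-1}, Ĝ(s) = diag(ĝ₁(s),...,ĝ_k(s)), and L_k = (S^{-1})^T Λ_k S^{-1}. Then for any s at which all inverses exist, V_k (V_k^T G^{-1}(s) V_k + f(s)Λ_k)^{-1} V_k^T = P (I_k + Ĝ(s) L_k f(s))^{-1} Ĝ(s) P^T. -/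
open scoped Matrix Matrix.Norms.L2Operator

/-! Since `Vk = P S` and `Pᵀ G⁻¹ P = Ĝ⁻¹`, the matrix `Vkᵀ G⁻¹ Vk + f Λk` is the congruence
`Sᵀ (Ĝ⁻¹ + f Lk) S`; the factors `S` cancel against those of `Vk`, and
`Ĝ⁻¹ + f Lk = Ĝ⁻¹ (1 + f Ĝ Lk)` inverts to `(1 + f Ĝ Lk)⁻¹ Ĝ`. -/

namespace Matrix

theorem transpose_mul_diagonal_mul_of_indicator {m n R : Type*} [Fintype m] [DecidableEq m]
    [DecidableEq n] [CommSemiring R] (c : m → n) (d : m → R) :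
    (of fun i j => if c i = j then (1 : R) else 0)ᵀ * diagonal d *
        of (fun i j => if c i = j then (1 : R) else 0) =
      diagonal fun j => ∑ i, if c i = j then d i else 0 := by
  ext j j'
  simp only [mul_apply, transpose_apply, diagonal_apply, of_apply, mul_ite, mul_one, mul_zero,
    ite_mul, one_mul, zero_mul, Finset.sum_ite_eq', Finset.mem_univ, if_true]
  split_ifs with h
  · subst h
    exact Finset.sum_congr rfl fun i _ => by split_ifs <;> rfl
  · refine Finset.sum_eq_zero fun i _ => ?_
    split_ifs with h1 h2 <;> first | rfl | exact absurd (h2.symm.trans h1) h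

variable {m n R : Type*} [Fintype n] [DecidableEq n] [CommRing R]

theorem transpose_inv_congr_cancel {S : Matrix n n R} (hS : IsUnit S) (Λ : Matrix n n R) :
    Sᵀ * ((S⁻¹)ᵀ * Λ * S⁻¹) * S = Λ := by
  have hS' : S⁻¹ * S = 1 := nonsing_inv_mul S ((isUnit_iff_isUnit_det S).mp hS)
  calc Sᵀ * ((S⁻¹)ᵀ * Λ * S⁻¹) * S = (S⁻¹ * S)ᵀ * Λ * (S⁻¹ * S) := by
        simp only [transpose_mul, Matrix.mul_assoc]
    _ = Λ := by rw [hS', transpose_one, Matrix.one_mul, Matrix.mul_one]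

theorem mul_congr_inv_mul_transpose [Fintype m] (P : Matrix m n R) {S : Matrix n n R}
    (hS : IsUnit S) (A : Matrix n n R) :
    P * S * (Sᵀ * A * S)⁻¹ * (P * S)ᵀ = P * A⁻¹ * Pᵀ := by
  have hS' : S * S⁻¹ = 1 := mul_nonsing_inv S ((isUnit_iff_isUnit_det S).mp hS)
  calc P * S * (Sᵀ * A * S)⁻¹ * (P * S)ᵀ = P * (S * S⁻¹) * A⁻¹ * (S * S⁻¹)ᵀ * Pᵀ := by
        simp only [mul_inv_rev, transpose_mul, transpose_nonsing_inv, Matrix.mul_assoc]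
    _ = P * A⁻¹ * Pᵀ := by rw [hS', transpose_one, Matrix.mul_one, Matrix.mul_one]

theorem add_smul_inv_eq_of_mul_eq_one {D E : Matrix n n R} (hDE : D * E = 1) (f : R)
    (L : Matrix n n R) : (D + f • L)⁻¹ = (1 + f • (E * L))⁻¹ * E := by
  have hfactor : D + f • L = D * (1 + f • (E * L)) := by
    rw [Matrix.mul_add, Matrix.mul_one, Matrix.mul_smul, ← Matrix.mul_assoc, hDE, Matrix.one_mul]
  rw [hfactor, mul_inv_rev, inv_eq_right_inv hDE]

end Matrix

theorem block_ideal_structure_preserving_general {n k : ℕ}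
    (c : Fin n → Fin k)  -- block membership of the partition {I₁,...,I_k}
    (S : Matrix (Fin k) (Fin k) ℂ) (hS : IsUnit S)
    (g : Fin n → ℂ)
    (f : ℂ)
    -- the indicator matrix P = [1_{I₁},...,1_{I_k}]
    (P : Matrix (Fin n) (Fin k) ℂ)
    (hP : P = Matrix.of fun i j => if c i = j then (1 : ℂ) else 0)
    -- V_k = P S  (k-block-ideal assumption)
    (Vk : Matrix (Fin n) (Fin k) ℂ) (hVk : Vk = P * S)
    (Λk : Matrix (Fin k) (Fin k) ℂ)
    (Ginv : Matrix (Fin n) (Fin n) ℂ) (hGinv : Ginv = Matrix.diagonal fun i => (g i)⁻¹)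
    -- aggregate dynamics ĝ_j = (∑_{i ∈ I_j} g_i⁻¹)⁻¹
    (Ghat : Matrix (Fin k) (Fin k) ℂ)
    (hGhat : Ghat = Matrix.diagonal fun j => (∑ i, if c i = j then (g i)⁻¹ else 0)⁻¹)
    (hGhat0 : ∀ j, (∑ i, if c i = j then (g i)⁻¹ else 0) ≠ 0)
    -- reduced network Laplacian
    (Lk : Matrix (Fin k) (Fin k) ℂ) (hLk : Lk = (S⁻¹)ᵀ * Λk * S⁻¹) :
    Vk * (Vkᵀ * Ginv * Vk + f • Λk)⁻¹ * Vkᵀ =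
      P * (1 + f • (Ghat * Lk))⁻¹ * Ghat * Pᵀ := by
  set D : Matrix (Fin k) (Fin k) ℂ :=
    Matrix.diagonal fun j => ∑ i, if c i = j then (g i)⁻¹ else 0
  have hDGhat : D * Ghat = 1 := by
    rw [hGhat, Matrix.diagonal_mul_diagonal, ← Matrix.diagonal_one]
    exact congrArg Matrix.diagonal (funext fun j => mul_inv_cancel₀ (hGhat0 j))
  have hPGP : Pᵀ * Ginv * P = D := by
    rw [hP, hGinv, Matrix.transpose_mul_diagonal_mul_of_indicator]
  have hcongr : Vkᵀ * Ginv * Vk + f • Λk = Sᵀ * (D + f • Lk) * S := by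
    rw [Matrix.mul_add, Matrix.add_mul, Matrix.mul_smul, Matrix.smul_mul, hLk,
      Matrix.transpose_inv_congr_cancel hS, ← hPGP, hVk, Matrix.transpose_mul]
    simp only [Matrix.mul_assoc]
  rw [hcongr, hVk, Matrix.mul_congr_inv_mul_transpose P hS,
    Matrix.add_smul_inv_eq_of_mul_eq_one hDGhat]
  simp only [Matrix.mul_assoc]

/-- for a k-block-ideal Laplacian, the rank-k transfer matrix is
realized by the structure-preserving reduced network of aggregated nodes. -/
theorem block_ideal_structure_preserving {n k : ℕ}
    (c : Fin n → Fin k)  -- block membership of the partition {I₁,...,I_k}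
    (S : Matrix (Fin k) (Fin k) ℂ) (hS : IsUnit S)
    (lam : Fin k → ℝ)  -- bottom k eigenvalues of L
    (g : Fin n → ℂ) (hg : ∀ i, g i ≠ 0)
    (f : ℂ)
    -- the indicator matrix P = [1_{I₁},...,1_{I_k}]
    (P : Matrix (Fin n) (Fin k) ℂ)
    (hP : P = Matrix.of fun i j => if c i = j then (1 : ℂ) else 0)
    -- V_k = P S  (k-block-ideal assumption)
    (Vk : Matrix (Fin n) (Fin k) ℂ) (hVk : Vk = P * S)
    (Λk : Matrix (Fin k) (Fin k) ℂ) (hΛk : Λk = (Matrix.diagonal lam).map Complex.ofReal)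
    (Ginv : Matrix (Fin n) (Fin n) ℂ) (hGinv : Ginv = Matrix.diagonal fun i => (g i)⁻¹)
    -- aggregate dynamics ĝ_j = (∑_{i ∈ I_j} g_i⁻¹)⁻¹
    (Ghat : Matrix (Fin k) (Fin k) ℂ)
    (hGhat : Ghat = Matrix.diagonal fun j => (∑ i, if c i = j then (g i)⁻¹ else 0)⁻¹)
    (hGhat0 : ∀ j, (∑ i, if c i = j then (g i)⁻¹ else 0) ≠ 0)
    -- reduced network Laplacian
    (Lk : Matrix (Fin k) (Fin k) ℂ) (hLk : Lk = (S⁻¹)ᵀ * Λk * S⁻¹)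
    -- all the inverses involved exist
    (hinv1 : IsUnit (Vkᵀ * Ginv * Vk + f • Λk))
    (hinv2 : IsUnit (1 + f • (Ghat * Lk))) :
    Vk * (Vkᵀ * Ginv * Vk + f • Λk)⁻¹ * Vkᵀ =
      P * (1 + f • (Ghat * Lk))⁻¹ * Ghat * Pᵀ :=
  block_ideal_structure_preserving_general c S hS g f P hP Vk hVk Λk Ginv hGinv Ghat hGhat hGhat0 Lk
    hLk
end

section
/- Under the assumptions above, suppose additionally min_i α_{ii} − (2 n_max / n_min) max_i ∑_{j≠i} β_{ij} = Δ > 0, where n_min = min_i n_i, n_max = max_i n_i. Then min_i ( n_i α_{ii} + ∑_{j≠i} β_{ij} n_j ) ≥ max_i ( n_i ∑_{j≠i} β_{ij} + ∑_{j≠i} β_{ij} n_j ) + n_min Δ. Consequently λ_{k+1}(L_blk) − λ_k(L_blk) ≥ n_min Δ, where λ_k(L_blk) ≤ max eigenvalue of L̃_k and λ_{k+1}(L_blk) = min_i ( n_i α_{ii} + ∑_{j≠i} β_{ij} n_j ). -/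
open scoped Matrix

/-- spectral gap of the block Laplacian under the connectivity
difference assumption. -/
theorem block_laplacian_spectral_gap {k : ℕ} [NeZero k]
    (m : Fin k → ℕ) (hm : ∀ i, 0 < m i)
    (B : Matrix (Fin k) (Fin k) ℝ) (hBsymm : Bᵀ = B)
    (hBdiag : ∀ i, 0 ≤ B i i) (hBoff : ∀ i j, i ≠ j → 0 ≤ B i j)
    (nmin nmax Δ : ℝ)
    (hnmin : nmin = Finset.univ.inf' Finset.univ_nonempty fun i => (m i : ℝ))
    (hnmax : nmax = Finset.univ.sup' Finset.univ_nonempty fun i => (m i : ℝ))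
    (hΔ : Δ = (Finset.univ.inf' Finset.univ_nonempty fun i => B i i) -
      (2 * nmax / nmin) *
        Finset.univ.sup' Finset.univ_nonempty
          (fun i => ∑ j ∈ Finset.univ.erase i, B i j))
    (hΔpos : 0 < Δ) :
    ((Finset.univ.inf' Finset.univ_nonempty fun i =>
        (m i : ℝ) * B i i + ∑ j ∈ Finset.univ.erase i, B i j * (m j : ℝ)) ≥
      (Finset.univ.sup' Finset.univ_nonempty fun i =>
        (m i : ℝ) * (∑ j ∈ Finset.univ.erase i, B i j) +
          ∑ j ∈ Finset.univ.erase i, B i j * (m j : ℝ)) + nmin * Δ) ∧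
    ∀ lamk lamk1 : ℝ,
      lamk ≤ (Finset.univ.sup' Finset.univ_nonempty fun i =>
        (m i : ℝ) * (∑ j ∈ Finset.univ.erase i, B i j) +
          ∑ j ∈ Finset.univ.erase i, B i j * (m j : ℝ)) →
      lamk1 = (Finset.univ.inf' Finset.univ_nonempty fun i =>
        (m i : ℝ) * B i i + ∑ j ∈ Finset.univ.erase i, B i j * (m j : ℝ)) →
      lamk1 - lamk ≥ nmin * Δ := by
  set S : Fin k → ℝ := fun i => ∑ j ∈ Finset.univ.erase i, B i j with hS
  have hSnn : ∀ i, 0 ≤ S i := fun i =>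
    Finset.sum_nonneg fun j hj => hBoff i j (Ne.symm (Finset.ne_of_mem_erase hj))
  set α : ℝ := Finset.univ.inf' Finset.univ_nonempty fun i => B i i with hα
  set T : ℝ := Finset.univ.sup' Finset.univ_nonempty S with hT
  have hmmin : ∀ i, nmin ≤ (m i : ℝ) := fun i => hnmin ▸ Finset.inf'_le _ (Finset.mem_univ i)
  have hmmax : ∀ i, (m i : ℝ) ≤ nmax := fun i => hnmax ▸ Finset.le_sup' (fun i => (m i : ℝ)) (Finset.mem_univ i)
  have hnminpos : 0 < nmin := by
    obtain ⟨i, _, hi⟩ := Finset.exists_mem_eq_inf' (Finset.univ_nonempty (α := Fin k))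
      fun i => (m i : ℝ)
    rw [hnmin, hi]
    exact_mod_cast hm i
  have hnmaxpos : 0 < nmax := lt_of_lt_of_le hnminpos (le_trans (hmmin ⟨0, Nat.pos_of_ne_zero (NeZero.ne k)⟩) (hmmax _))
  have hTnn : 0 ≤ T := le_trans (hSnn ⟨0, Nat.pos_of_ne_zero (NeZero.ne k)⟩)
    (Finset.le_sup' S (Finset.mem_univ _))
  have hαnn : 0 ≤ α := Finset.le_inf' _ _ fun i _ => hBdiag i
  have hΔ' : nmin * Δ = nmin * α - 2 * nmax * T := by
    have : nmin * (2 * nmax / nmin * T) = 2 * nmax * T := by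
      field_simp
    rw [hΔ, mul_sub, this]
  have h1 : (Finset.univ.sup' Finset.univ_nonempty fun i =>
        (m i : ℝ) * (∑ j ∈ Finset.univ.erase i, B i j) +
          ∑ j ∈ Finset.univ.erase i, B i j * (m j : ℝ)) ≤ 2 * nmax * T := by
    apply Finset.sup'_le
    intro i _
    have hST : S i ≤ T := Finset.le_sup' S (Finset.mem_univ i)
    have ha : (m i : ℝ) * S i ≤ nmax * T :=
      mul_le_mul (hmmax i) hST (hSnn i) (le_of_lt hnmaxpos)
    have hb : ∑ j ∈ Finset.univ.erase i, B i j * (m j : ℝ) ≤ nmax * T := by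
      calc ∑ j ∈ Finset.univ.erase i, B i j * (m j : ℝ)
          ≤ ∑ j ∈ Finset.univ.erase i, B i j * nmax := by
            apply Finset.sum_le_sum
            intro j hj
            exact mul_le_mul_of_nonneg_left (hmmax j)
              (hBoff i j (Ne.symm (Finset.ne_of_mem_erase hj)))
        _ = S i * nmax := by rw [hS, ← Finset.sum_mul]
        _ ≤ T * nmax := mul_le_mul_of_nonneg_right hST (le_of_lt hnmaxpos)
        _ = nmax * T := mul_comm _ _
    linarith
  have h2 : ∀ i, nmin * α ≤ (m i : ℝ) * B i i + ∑ j ∈ Finset.univ.erase i, B i j * (m j : ℝ) := by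
    intro i
    have ha : nmin * α ≤ (m i : ℝ) * B i i :=
      mul_le_mul (hmmin i) (Finset.inf'_le _ (Finset.mem_univ i)) hαnn
        (by positivity)
    have hb : 0 ≤ ∑ j ∈ Finset.univ.erase i, B i j * (m j : ℝ) :=
      Finset.sum_nonneg fun j hj =>
        mul_nonneg (hBoff i j (Ne.symm (Finset.ne_of_mem_erase hj))) (Nat.cast_nonneg _)
    linarith
  have main : (Finset.univ.inf' Finset.univ_nonempty fun i =>
        (m i : ℝ) * B i i + ∑ j ∈ Finset.univ.erase i, B i j * (m j : ℝ)) ≥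
      (Finset.univ.sup' Finset.univ_nonempty fun i =>
        (m i : ℝ) * (∑ j ∈ Finset.univ.erase i, B i j) +
          ∑ j ∈ Finset.univ.erase i, B i j * (m j : ℝ)) + nmin * Δ := by
    apply Finset.le_inf'
    intro i _
    have := h2 i
    linarith
  refine ⟨main, fun lamk lamk1 hk hk1 => ?_⟩
  subst hk1
  linarith
end
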